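/- arXiv:cs/0106053 — 3 statements merged into one kernel-verified Lean document; each statement's English description precedes it below -/
import Mathlib

section
/- Define g : ℤ → ℕ by g(x) = (1000 - x).toNat if 1 < x < 1000, g(x) = (1000 + x).toNat if -1000 < x < -1, and g(x) = 0 otherwise; and define f : ℤ → ℤ by f(x) = -x^2 if 1 < x < 1000, f(x) = x^2 if -1000 < x < -1, and f(x) = x otherwise. Then for every integer x satisfying (1 < x < 1000) ∨ (-1000 < x < -1), we have g(f(x)) < g(x). -/
def oscLevel (x : ℤ) : ℕ :=
  if 1 < x ∧ x < 1000 then (1000 - x).toNat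
  else if -1000 < x ∧ x < -1 then (1000 + x).toNat
  else 0

def oscStep (x : ℤ) : ℤ :=
  if 1 < x ∧ x < 1000 then -x ^ 2
  else if -1000 < x ∧ x < -1 then x ^ 2
  else x

theorem stmt_2 :
    ∀ x : ℤ, ((1 < x ∧ x < 1000) ∨ (-1000 < x ∧ x < -1)) →
      oscLevel (oscStep x) < oscLevel x := by
  intro x h
  rcases h with ⟨h1, h2⟩ | ⟨h1, h2⟩
  · simp only [oscStep, oscLevel]
    set y := -x ^ 2 with hy
    have h3 : y < -x := by rw [hy]; nlinarith
    have h4 : y < -1 := by rw [hy]; nlinarith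
    split_ifs <;> omega
  · simp only [oscStep, oscLevel]
    set y := x ^ 2 with hy
    have h3 : x < y := by nlinarith [sq_nonneg (x - 1)]
    have h4 : -x < y := by nlinarith [sq_nonneg (x + 1)]
    have h5 : 1 < y := by nlinarith
    split_ifs <;> omega
end

section
/- For all integers x and y, there exists a natural number n such that iterating the map step(a,b) = (a - b, b + 1) n times starting from (x, y) yields a pair (a, b) with a ≤ b. Equivalently, the relation R (a', b') (a, b) ↔ (a > b ∧ a' = a - b ∧ b' = b + 1) on ℤ × ℤ is well-founded. -/
private def stepFun : ℤ × ℤ → ℤ × ℤ := fun p => (p.1 - p.2, p.2 + 1)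

private lemma auxA : ∀ a : ℕ, ∀ x y : ℤ, 1 ≤ y → x.toNat ≤ a →
    ∃ n : ℕ, (stepFun^[n] (x, y)).1 ≤ (stepFun^[n] (x, y)).2 := by
  intro a
  induction a with
  | zero =>
    intro x y hy hx
    refine ⟨0, ?_⟩
    simp only [Function.iterate_zero, id]
    have : x ≤ 0 := by omega
    omega
  | succ a ih =>
    intro x y hy hx
    by_cases h : x ≤ y
    · exact ⟨0, by simpa using h⟩
    · push_neg at h
      obtain ⟨n, hn⟩ := ih (x - y) (y + 1) (by omega) (by omega)
      refine ⟨n + 1, ?_⟩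
      rw [Function.iterate_succ_apply]
      exact hn

private lemma auxB : ∀ k : ℕ, ∀ x y : ℤ, (1 - y).toNat ≤ k →
    ∃ n : ℕ, (stepFun^[n] (x, y)).1 ≤ (stepFun^[n] (x, y)).2 := by
  intro k
  induction k with
  | zero =>
    intro x y hy
    exact auxA x.toNat x y (by omega) le_rfl
  | succ k ih =>
    intro x y hy
    by_cases h : x ≤ y
    · exact ⟨0, by simpa using h⟩
    · push_neg at h
      by_cases h1 : 1 ≤ y
      · exact auxA x.toNat x y h1 le_rfl
      · obtain ⟨n, hn⟩ := ih (x - y) (y + 1) (by omega)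
        refine ⟨n + 1, ?_⟩
        rw [Function.iterate_succ_apply]
        exact hn

theorem stmt_9 :
    (∀ x y : ℤ, ∃ n : ℕ,
        ((fun p : ℤ × ℤ => (p.1 - p.2, p.2 + 1))^[n] (x, y)).1 ≤
        ((fun p : ℤ × ℤ => (p.1 - p.2, p.2 + 1))^[n] (x, y)).2) ∧
    WellFounded (fun p' p : ℤ × ℤ =>
      p.1 > p.2 ∧ p'.1 = p.1 - p.2 ∧ p'.2 = p.2 + 1) := by
  constructor
  · intro x y
    exact auxB (1 - y).toNat x y le_rfl
  · have : Subrelation (fun p' p : ℤ × ℤ =>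
        p.1 > p.2 ∧ p'.1 = p.1 - p.2 ∧ p'.2 = p.2 + 1)
        (InvImage (Prod.Lex (· < ·) (· < ·))
          (fun p : ℤ × ℤ => ((1 - p.2).toNat, p.1.toNat))) := by
      intro p' p ⟨h1, h2, h3⟩
      unfold InvImage
      simp only
      by_cases h : 1 ≤ p.2
      · have he : (1 - p'.2).toNat = (1 - p.2).toNat := by omega
        rw [he]
        exact Prod.Lex.right _ (by omega)
      · exact Prod.Lex.left _ _ (by omega)
    exact this.wf (InvImage.wf _ (WellFounded.prod_lex Nat.lt_wfRel.wf Nat.lt_wfRel.wf))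
end

section
/- For all integers x and y, every sequence of iterations of the map step(a,b) = (b + 1, a), applied only while the first component is negative, is finite: there exists a natural number n such that the first component of the n-th iterate of step starting at (x,y) is nonnegative. Equivalently, the relation R (a', b') (a, b) ↔ (a < 0 ∧ a' = b + 1 ∧ b' = a) on ℤ × ℤ is well-founded. -/
private lemma iter2 (x y : ℤ) (k : ℕ) :
    (fun p : ℤ × ℤ => (p.2 + 1, p.1))^[2*k] (x, y) = (x + k, y + k) := by
  induction k with
  | zero => simp
  | succ n ih =>
      have : 2 * (n + 1) = (2 * n) + 1 + 1 := by ring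
      rw [this, Function.iterate_succ_apply', Function.iterate_succ_apply', ih]
      simp
      constructor <;> ring

theorem stmt_11 :
    (∀ x y : ℤ, ∃ n : ℕ,
        0 ≤ ((fun p : ℤ × ℤ => (p.2 + 1, p.1))^[n] (x, y)).1) ∧
    WellFounded (fun p' p : ℤ × ℤ =>
      p.1 < 0 ∧ p'.1 = p.2 + 1 ∧ p'.2 = p.1) := by
  constructor
  · intro x y
    refine ⟨2 * (-x).toNat, ?_⟩
    rw [iter2]
    simp only
    omega
  · set m : ℤ × ℤ → ℕ := fun p => (-p.1).toNat + (-p.2).toNat + (if p.1 < 0 then 1 else 0) with hm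
    have hdec : ∀ p' p : ℤ × ℤ, (p.1 < 0 ∧ p'.1 = p.2 + 1 ∧ p'.2 = p.1) → m p' < m p := by
      rintro ⟨a', b'⟩ ⟨a, b⟩ ⟨ha, h1, h2⟩
      simp only [hm] at *
      split_ifs <;> omega
    exact Subrelation.wf (fun {p' p} h => hdec p' p h) (InvImage.wf m Nat.lt_wfRel.wf)
end
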